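/- Let Ũ ⊆ ℝⁿ be open and let F : Ũ × ℝⁿ → ℝ be a horizontally C¹ family of asymmetric norms. Then the corresponding family of dual asymmetric norms F_* : Ũ × ℝⁿ → ℝ, F_*(x, α) = sup{⟨α, y⟩ : F(x, y) ≤ 1}, is locally Lipschitz on Ũ × ℝⁿ. -/

import Mathlib

open scoped RealInnerProductSpace

/-- `ℝⁿ` with the Euclidean inner product. -/
abbrev En (n : ℕ) := EuclideanSpace ℝ (Fin n)

/-- An asymmetric norm on `ℝⁿ`. -/
def IsAsymNorm {n : ℕ} (F : En n → ℝ) : Prop :=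
  (∀ y, 0 ≤ F y) ∧ (∀ y, F y = 0 ↔ y = 0) ∧
  (∀ l : ℝ, 0 < l → ∀ y, F (l • y) = l * F y) ∧
  (∀ y₁ y₂, F (y₁ + y₂) ≤ F y₁ + F y₂)

/-- A horizontally `C¹` family of asymmetric norms on `Ut × ℝⁿ`: `F` is continuous,
each `F x` is an asymmetric norm, and the partial derivative of `F` with respect to
the (horizontal) variable `x` exists everywhere and is continuous. -/
def HorizC1Family {n : ℕ} (Ut : Set (En n)) (F : En n → En n → ℝ) : Prop :=
  ContinuousOn (fun p : En n × En n => F p.1 p.2) (Ut ×ˢ Set.univ) ∧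
  (∀ x ∈ Ut, IsAsymNorm (F x)) ∧
  ∃ DF : En n × En n → (En n →L[ℝ] ℝ),
    (∀ x ∈ Ut, ∀ y, HasFDerivAt (fun x' => F x' y) (DF (x, y)) x) ∧
    ContinuousOn DF (Ut ×ˢ Set.univ)

/-- The family of dual asymmetric norms `F_*(x, α) = sup {⟨α, y⟩ : F x y ≤ 1}`. -/
noncomputable def dualNormF {n : ℕ} (F : En n → En n → ℝ) (x α : En n) : ℝ :=
  sSup ((fun y => ⟪α, y⟫) '' {y | F x y ≤ 1})

/-! `F_*(x, ·)` is the support function of the unit ball `B x = {y | F x y ≤ 1}`. On a closed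
ball `K ⊆ Ũ` around `x₀`, compactness of `K × sphere 0 1` gives `c > 0` with `c ‖y‖ ≤ F x y`,
so all `B x` lie in the ball of radius `c⁻¹`; this makes `F_*` Lipschitz in `α`. The mean value
theorem in `x`, with `D_x F` bounded on `K × closedBall 0 c⁻¹`, gives
`B x' ⊆ (1 + M ‖x - x'‖) • B x`, which makes `F_*` Lipschitz in `x`. -/

open scoped NNReal Pointwise
open Metric Set

section SupportFunction

variable {E : Type*} [NormedAddCommGroup E] [InnerProductSpace ℝ E]

noncomputable def supportFunction (S : Set E) (α : E) : ℝ :=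
  sSup ((fun y => ⟪α, y⟫) '' S)

variable {S T : Set E} {R : ℝ}

theorem inner_le_supportFunction (hS : S ⊆ closedBall 0 R) (α : E) {y : E} (hy : y ∈ S) :
    ⟪α, y⟫ ≤ supportFunction S α := by
  refine le_csSup ⟨‖α‖ * R, ?_⟩ (mem_image_of_mem _ hy)
  rintro _ ⟨z, hz, rfl⟩
  have hzR : ‖z‖ ≤ R := by simpa using hS hz
  exact (real_inner_le_norm α z).trans (mul_le_mul_of_nonneg_left hzR (norm_nonneg α))

theorem supportFunction_le (hS : S.Nonempty) {α : E} {b : ℝ} (h : ∀ y ∈ S, ⟪α, y⟫ ≤ b) :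
    supportFunction S α ≤ b :=
  csSup_le (hS.image _) (forall_mem_image.2 h)

theorem supportFunction_le_mul_norm (hS₀ : S.Nonempty) (hS : S ⊆ closedBall 0 R) (α : E) :
    supportFunction S α ≤ R * ‖α‖ :=
  supportFunction_le hS₀ fun y hy => by
    have hyR : ‖y‖ ≤ R := by simpa using hS hy
    calc ⟪α, y⟫ ≤ ‖α‖ * ‖y‖ := real_inner_le_norm α y
      _ ≤ R * ‖α‖ := by rw [mul_comm]; gcongr

theorem supportFunction_sub_le (hS₀ : S.Nonempty) (hS : S ⊆ closedBall 0 R) (α β : E) :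
    supportFunction S α - supportFunction S β ≤ R * ‖α - β‖ := by
  rw [sub_le_iff_le_add]
  refine supportFunction_le hS₀ fun y hy => ?_
  have hyR : ‖y‖ ≤ R := by simpa using hS hy
  calc ⟪α, y⟫ = ⟪α - β, y⟫ + ⟪β, y⟫ := by rw [inner_sub_left]; ring
    _ ≤ ‖α - β‖ * ‖y‖ + supportFunction S β :=
      add_le_add (real_inner_le_norm _ _) (inner_le_supportFunction hS β hy)
    _ ≤ R * ‖α - β‖ + supportFunction S β := by rw [mul_comm]; gcongr

theorem supportFunction_le_mul_of_subset_smul (hS₀ : S.Nonempty) (hT : T ⊆ closedBall 0 R)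
    {s : ℝ} (hs : 0 ≤ s) (hST : S ⊆ s • T) (α : E) :
    supportFunction S α ≤ s * supportFunction T α := by
  refine supportFunction_le hS₀ fun y hy => ?_
  obtain ⟨z, hz, rfl⟩ := hST hy
  rw [real_inner_smul_right]
  exact mul_le_mul_of_nonneg_left (inner_le_supportFunction hT α hz) hs

theorem lipschitzOnWith_supportFunction {X : Type*} [PseudoMetricSpace X] {B : X → Set E}
    {K : Set X} {M : ℝ≥0} (hne : ∀ x ∈ K, (B x).Nonempty) (hR : ∀ x ∈ K, B x ⊆ closedBall 0 R)
    (hB : ∀ x ∈ K, ∀ x' ∈ K, B x' ⊆ (1 + M * dist x x') • B x) (a : ℝ) :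
    LipschitzOnWith (M * R * a + R).toNNReal (fun p : X × E => supportFunction (B p.1) p.2)
      (K ×ˢ closedBall 0 a) := by
  have key : ∀ p ∈ K ×ˢ closedBall 0 a, ∀ q ∈ K ×ˢ closedBall 0 a,
      supportFunction (B p.1) p.2 - supportFunction (B q.1) q.2 ≤ (M * R * a + R) * dist p q := by
    rintro ⟨x, α⟩ ⟨hx, hα⟩ ⟨x', α'⟩ ⟨hx', -⟩
    have hα : ‖α‖ ≤ a := by simpa using hα
    have hR₀ : 0 ≤ R := nonempty_closedBall.1 ((hne x hx).mono (hR x hx))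
    have hdx : dist x x' ≤ dist (x, α) (x', α') := by rw [Prod.dist_eq]; exact le_max_left _ _
    have hdα : dist α α' ≤ dist (x, α) (x', α') := by rw [Prod.dist_eq]; exact le_max_right _ _
    have hx_x' : supportFunction (B x) α ≤ supportFunction (B x') α + M * dist x x' * (R * a) :=
      calc supportFunction (B x) α ≤ (1 + M * dist x' x) * supportFunction (B x') α :=
            supportFunction_le_mul_of_subset_smul (hne x hx) (hR x' hx') (by positivity)
              (hB x' hx' x hx) α
        _ = supportFunction (B x') α + M * dist x x' * supportFunction (B x') α := by
            rw [dist_comm]; ring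
        _ ≤ supportFunction (B x') α + M * dist x x' * (R * a) := by
            gcongr
            exact (supportFunction_le_mul_norm (hne x' hx') (hR x' hx') α).trans (by gcongr)
    have hα_α' := supportFunction_sub_le (hne x' hx') (hR x' hx') α α'
    rw [← dist_eq_norm] at hα_α'
    calc supportFunction (B x) α - supportFunction (B x') α'
        ≤ M * R * a * dist x x' + R * dist α α' := by linarith
      _ ≤ M * R * a * dist (x, α) (x', α') + R * dist (x, α) (x', α') := by
          have : 0 ≤ a := (norm_nonneg α).trans hα
          gcongr
      _ = (M * R * a + R) * dist (x, α) (x', α') := by ring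
  refine LipschitzOnWith.of_dist_le' fun p hp q hq => ?_
  rw [Real.dist_eq, abs_sub_le_iff]
  exact ⟨key p hp q hq, dist_comm q p ▸ key q hq p hp⟩

end SupportFunction

theorem IsAsymNorm.pos {n : ℕ} {G : En n → ℝ} (hG : IsAsymNorm G) {y : En n} (hy : y ≠ 0) :
    0 < G y :=
  (hG.1 y).lt_of_ne fun h => hy ((hG.2.1 y).1 h.symm)

section NormedSpace

variable {E : Type*} [NormedAddCommGroup E] [NormedSpace ℝ E]

theorem mem_smul_setOf_le_one {G : E → ℝ} (hG : ∀ l : ℝ, 0 < l → ∀ y, G (l • y) = l * G y)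
    {s : ℝ} (hs : 0 < s) {y : E} (hy : G y ≤ s) : y ∈ s • {z | G z ≤ 1} := by
  refine Set.mem_smul_set.2 ⟨s⁻¹ • y, ?_, smul_inv_smul₀ hs.ne' y⟩
  change G (s⁻¹ • y) ≤ 1
  rw [hG _ (inv_pos.2 hs)]
  exact inv_mul_le_one_of_le₀ hy hs.le

theorem exists_pos_mul_norm_le_of_isCompact [ProperSpace E] {X : Type*} [TopologicalSpace X]
    {F : X → E → ℝ} {K : Set X} (hK : IsCompact K)
    (hF : ContinuousOn (fun p : X × E => F p.1 p.2) (K ×ˢ univ))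
    (hpos : ∀ x ∈ K, ∀ y ≠ 0, 0 < F x y)
    (hhom : ∀ x ∈ K, ∀ l : ℝ, 0 < l → ∀ y, F x (l • y) = l * F x y) :
    ∃ c > 0, ∀ x ∈ K, ∀ y, c * ‖y‖ ≤ F x y := by
  obtain ⟨c, hc, hcF⟩ := (hK.prod (isCompact_sphere (0 : E) 1)).exists_forall_le'
    (hF.mono (prod_mono subset_rfl (subset_univ _))) fun p hp =>
      hpos p.1 hp.1 p.2 (ne_zero_of_mem_unit_sphere ⟨p.2, hp.2⟩)
  refine ⟨c, hc, fun x hx y => ?_⟩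
  rcases eq_or_ne y 0 with rfl | hy
  · have h0 := hhom x hx 2 two_pos 0
    rw [smul_zero] at h0
    rw [norm_zero, mul_zero]
    linarith
  · have hyn : 0 < ‖y‖ := norm_pos_iff.2 hy
    have hunit : ‖y‖⁻¹ • y ∈ sphere (0 : E) 1 := by
      simp [norm_smul, hyn.ne']
    calc c * ‖y‖ ≤ F x (‖y‖⁻¹ • y) * ‖y‖ := by gcongr; exact hcF (x, _) ⟨hx, hunit⟩
      _ = F x y := by rw [hhom x hx _ (inv_pos.2 hyn)]; field_simp

theorem exists_lipschitzOnWith_of_hasFDerivAt {X : Type*} [TopologicalSpace X] {f : E → X → ℝ}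
    {f' : E × X → E →L[ℝ] ℝ} {K : Set E} {L : Set X} (hK : IsCompact K) (hKc : Convex ℝ K)
    (hL : IsCompact L) (hf : ∀ x ∈ K, ∀ y ∈ L, HasFDerivAt (fun x' => f x' y) (f' (x, y)) x)
    (hf' : ContinuousOn f' (K ×ˢ L)) :
    ∃ M : ℝ≥0, ∀ y ∈ L, LipschitzOnWith M (fun x => f x y) K := by
  obtain ⟨C, hC⟩ := (hK.prod hL).exists_bound_of_continuousOn hf'
  refine ⟨C.toNNReal, fun y hy => hKc.lipschitzOnWith_of_nnnorm_hasFDerivWithin_le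
    (fun x hx => (hf x hx y hy).hasFDerivWithinAt) fun x hx => ?_⟩
  rw [← NNReal.coe_le_coe, coe_nnnorm, Real.coe_toNNReal']
  exact (hC _ ⟨hx, hy⟩).trans (le_max_left _ _)

end NormedSpace

/-- The family of dual asymmetric norms of a horizontally `C¹` family of asymmetric
norms is locally Lipschitz on `Ũ × ℝⁿ`. -/
theorem dual_family_locallyLipschitz {n : ℕ} (Ut : Set (En n)) (hUt : IsOpen Ut)
    (F : En n → En n → ℝ) (hF : HorizC1Family Ut F) :
    LocallyLipschitzOn (Ut ×ˢ (Set.univ : Set (En n)))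
      (fun p : En n × En n => dualNormF F p.1 p.2) := by
  obtain ⟨hFcont, hFnorm, DF, hDF, hDFcont⟩ := hF
  rintro ⟨x₀, α₀⟩ ⟨hx₀, -⟩
  obtain ⟨r, hr, hKU⟩ := nhds_basis_closedBall.mem_iff.1 (hUt.mem_nhds hx₀)
  obtain ⟨c, hc, hcF⟩ := exists_pos_mul_norm_le_of_isCompact (isCompact_closedBall x₀ r)
    (hFcont.mono (prod_mono hKU subset_rfl)) (fun x hx _ => (hFnorm x (hKU hx)).pos)
    fun x hx => (hFnorm x (hKU hx)).2.2.1
  obtain ⟨M, hM⟩ := exists_lipschitzOnWith_of_hasFDerivAt (f := F) (isCompact_closedBall x₀ r)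
    (convex_closedBall x₀ r) (isCompact_closedBall (0 : En n) c⁻¹)
    (fun x hx y _ => hDF x (hKU hx) y) (hDFcont.mono (prod_mono hKU (subset_univ _)))
  have hball : ∀ x ∈ closedBall x₀ r, {y | F x y ≤ 1} ⊆ closedBall 0 c⁻¹ := fun x hx y hy => by
    rw [mem_closedBall_zero_iff, ← one_div, le_div_iff₀' hc]
    exact (hcF x hx y).trans hy
  have hscale : ∀ x ∈ closedBall x₀ r, ∀ x' ∈ closedBall x₀ r,
      {y | F x' y ≤ 1} ⊆ (1 + M * dist x x') • {y | F x y ≤ 1} := fun x hx x' hx' y hy => by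
    refine mem_smul_setOf_le_one (hFnorm x (hKU hx)).2.2.1 (by positivity) ?_
    have hLip := (hM y (hball x' hx' hy)).dist_le_mul x hx x' hx'
    have hy' : F x' y ≤ 1 := hy
    rw [Real.dist_eq] at hLip
    linarith [le_abs_self (F x y - F x' y)]
  have hne : ∀ x ∈ closedBall x₀ r, {y | F x y ≤ 1}.Nonempty := fun x hx =>
    ⟨0, by simp [((hFnorm x (hKU hx)).2.1 0).2 rfl]⟩
  exact ⟨_, _, mem_nhdsWithin_of_mem_nhds
    (prod_mem_nhds (closedBall_mem_nhds x₀ hr) (closedBall_mem_nhds α₀ one_pos)),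
    (lipschitzOnWith_supportFunction hne hball hscale (‖α₀‖ + 1)).mono
      (prod_mono subset_rfl (closedBall_subset_closedBall' (by simp [add_comm])))⟩
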